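/- Let D⁰ be a set with a distinguished element 0 and set D = D⁰ ∖ {0}, with D nonempty. Define ⊣ on D⁰ by: x ⊣ y = x if x ≠ 0 and y ≠ 0, and x ⊣ y = 0 if x = 0 or y = 0; and let ⊢ be the dual operation x ⊢ y = y ⊣ x. Then (D⁰,⊣,⊢) is an abelian dimonoid whose halo equals D, a bijection f : D⁰ → D⁰ is an automorphism of (D⁰,⊣,⊢) if and only if f(0) = 0 (so its automorphism group is isomorphic to S_D); moreover, if |D| > 1, then (D⁰,⊣,⊢) is not commutative. -/

import Mathlib

/-- A dimonoid: two associative operations `ld` (⊣) and `rd` (⊢) satisfying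
axioms (D1), (D2), (D3). -/
def IsDimonoid {D : Type*} (ld rd : D → D → D) : Prop :=
  (∀ x y z, ld (ld x y) z = ld x (ld y z)) ∧
  (∀ x y z, rd (rd x y) z = rd x (rd y z)) ∧
  (∀ x y z, ld (ld x y) z = ld x (rd y z)) ∧
  (∀ x y z, ld (rd x y) z = rd x (ld y z)) ∧
  (∀ x y z, rd (ld x y) z = rd x (rd y z))

/-- The automorphism group of a magma `(D, op)`, as a subgroup of `Equiv.Perm D`. -/
def semigroupAutGroup {D : Type*} (op : D → D → D) : Subgroup (Equiv.Perm D) where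
  carrier := {f : Equiv.Perm D | ∀ x y, f (op x y) = op (f x) (f y)}
  one_mem' := fun _ _ => rfl
  mul_mem' := by
    intro f g hf hg
    simp only [Set.mem_setOf_eq] at hf hg ⊢
    intro x y
    simp [Equiv.Perm.mul_apply, hg, hf]
  inv_mem' := by
    intro f hf
    simp only [Set.mem_setOf_eq] at hf ⊢
    intro x y
    apply f.injective
    rw [Equiv.Perm.coe_inv, Equiv.apply_symm_apply, hf, Equiv.apply_symm_apply, Equiv.apply_symm_apply]

/-- The automorphism group of a dimonoid `(D, ld, rd)`. -/
def dimonoidAutGroup {D : Type*} (ld rd : D → D → D) : Subgroup (Equiv.Perm D) :=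
  semigroupAutGroup ld ⊓ semigroupAutGroup rd

/-!
Off the zero, `x ⊣ y = x` is the left-zero band and `0` is absorbing, so every product of
`x, y, w` in `⊣, ⊢` is `0` as soon as one factor is `0`; otherwise both sides of each dimonoid
axiom are the same letter. An automorphism fixes the absorbing element `0`, and conversely a
bijection fixing `0` preserves the test "is `0`", hence both operations: the automorphism group
is the stabiliser of `0` in `S_{D⁰}`, which is `S_D`.
-/

namespace Equiv.Perm

variable {α : Type*} [DecidableEq α]

theorem range_ofSubtype_compl_singleton (a : α) :
    (ofSubtype : Perm ↥({a}ᶜ : Set α) →* Perm α).range = MulAction.stabilizer (Perm α) a := by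
  ext f
  rw [MulAction.mem_stabilizer_iff, Equiv.Perm.smul_def]
  constructor
  · rintro ⟨g, rfl⟩
    exact ofSubtype_apply_of_not_mem g (by simp)
  · intro ha
    have hcompl : ∀ x, f x ∈ ({a}ᶜ : Set α) ↔ x ∈ ({a}ᶜ : Set α) := fun x => by
      simpa using (f.injective.eq_iff' ha).not
    exact ⟨f.subtypePerm hcompl, ofSubtype_subtypePerm hcompl fun x hx => by
      rintro rfl
      exact hx ha⟩

noncomputable def stabilizerMulEquivPermCompl (a : α) :
    MulAction.stabilizer (Perm α) a ≃* Perm ↥({a}ᶜ : Set α) :=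
  (MulEquiv.subgroupCongr (range_ofSubtype_compl_singleton a)).symm.trans
    (MonoidHom.ofInjective ofSubtype_injective).symm

end Equiv.Perm

section AbelianDimonoid

variable {D : Type*} {ld rd : D → D → D}

/-- For `rd = flip ld` the dimonoid axioms reduce to associativity and `x(yw) = x(wy)`. -/
theorem isDimonoid_of_abelian (hrd : ∀ x y, rd x y = ld y x)
    (hassoc : ∀ x y w, ld (ld x y) w = ld x (ld y w))
    (hswap : ∀ x y w, ld x (ld y w) = ld x (ld w y)) :
    IsDimonoid ld rd := by
  refine ⟨hassoc, fun x y w => ?_, fun x y w => ?_, fun x y w => ?_, fun x y w => ?_⟩ <;>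
    simp only [hrd, hassoc]
  exacts [hswap x y w, hswap y x w, hswap w x y]

theorem map_rd_iff_map_ld (hrd : ∀ x y, rd x y = ld y x) (f : D → D) :
    (∀ x y, f (rd x y) = rd (f x) (f y)) ↔ ∀ x y, f (ld x y) = ld (f x) (f y) := by
  simp only [hrd]
  exact ⟨fun h x y => h y x, fun h x y => h y x⟩

end AbelianDimonoid

section LeftZeroWithZero

variable {α : Type*} [DecidableEq α] (z : α)

/-- The left-zero semigroup on `{z}ᶜ` with `z` adjoined as a zero. -/
def leftZeroWithZero (x y : α) : α :=
  if x = z ∨ y = z then z else x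

variable {z}

theorem eq_leftZeroWithZero {ld : α → α → α} (hld1 : ∀ x y, x ≠ z → y ≠ z → ld x y = x)
    (hld2 : ∀ x y, x = z ∨ y = z → ld x y = z) : ld = leftZeroWithZero z := by
  ext x y
  unfold leftZeroWithZero
  split_ifs with h
  · exact hld2 x y h
  · exact hld1 x y (not_or.mp h).1 (not_or.mp h).2

theorem leftZeroWithZero_assoc (x y w : α) :
    leftZeroWithZero z (leftZeroWithZero z x y) w =
      leftZeroWithZero z x (leftZeroWithZero z y w) := by
  unfold leftZeroWithZero
  by_cases hx : x = z <;> by_cases hy : y = z <;> by_cases hw : w = z <;> simp [hx, hy, hw]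

theorem leftZeroWithZero_swap_right (x y w : α) :
    leftZeroWithZero z x (leftZeroWithZero z y w) =
      leftZeroWithZero z x (leftZeroWithZero z w y) := by
  unfold leftZeroWithZero
  by_cases hx : x = z <;> by_cases hy : y = z <;> by_cases hw : w = z <;> simp [hx, hy, hw]

theorem forall_leftZeroWithZero_eq_self_iff (hD : ∃ x : α, x ≠ z) (e : α) :
    (∀ d, leftZeroWithZero z d e = d) ↔ e ≠ z := by
  unfold leftZeroWithZero
  constructor
  · rintro h rfl
    obtain ⟨a, ha⟩ := hD
    exact ha (by simpa using (h a).symm)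
  · intro he d
    by_cases hd : d = z <;> simp [hd, he]

theorem map_leftZeroWithZero_iff (f : Equiv.Perm α) :
    (∀ x y, f (leftZeroWithZero z x y) = leftZeroWithZero z (f x) (f y)) ↔ f z = z := by
  unfold leftZeroWithZero
  constructor
  · intro h
    simpa using h z (f.symm z)
  · intro hz x y
    have hf : ∀ x, f x = z ↔ x = z := fun x => f.injective.eq_iff' hz
    split_ifs <;> simp_all

theorem exists_leftZeroWithZero_ne (hD : (({z} : Set α)ᶜ).Nontrivial) :
    ∃ x y, leftZeroWithZero z x y ≠ leftZeroWithZero z y x := by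
  obtain ⟨x, hx, y, hy, hxy⟩ := hD
  refine ⟨x, y, ?_⟩
  simp_all [leftZeroWithZero]

end LeftZeroWithZero

/-- The dimonoid `(LO_D ⋈ RO_D)⁺⁰`: on `D⁰ = D ∪ {0}` with `x ⊣ y = x` when
`x ≠ 0` and `y ≠ 0`, and `x ⊣ y = 0` otherwise, together with the dual
operation, one gets an abelian dimonoid with halo `D = D⁰ ∖ {0}`; its
automorphisms are exactly the bijections fixing `0`, so its automorphism group
is isomorphic to `S_D`; and if `|D| > 1` it is not commutative. -/
theorem LO_RO_plus_zero_dimonoid {D0 : Type*} (z : D0)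
    (hD : ∃ x : D0, x ≠ z) (ld rd : D0 → D0 → D0)
    (hld1 : ∀ x y, x ≠ z → y ≠ z → ld x y = x)
    (hld2 : ∀ x y, x = z ∨ y = z → ld x y = z)
    (hrd : ∀ x y, rd x y = ld y x) :
    IsDimonoid ld rd ∧
    (∀ x y, ld x y = rd y x) ∧
    {e : D0 | ∀ d, rd e d = d ∧ ld d e = d} = ({z} : Set D0)ᶜ ∧
    (∀ f : Equiv.Perm D0,
      ((∀ x y, f (ld x y) = ld (f x) (f y)) ∧ (∀ x y, f (rd x y) = rd (f x) (f y))) ↔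
      f z = z) ∧
    Nonempty (↥(dimonoidAutGroup ld rd) ≃* Equiv.Perm ↥(({z} : Set D0)ᶜ)) ∧
    ((({z} : Set D0)ᶜ).Nontrivial →
      ¬ ((∀ x y, ld x y = ld y x) ∧ (∀ x y, rd x y = rd y x))) := by
  classical
  obtain rfl := eq_leftZeroWithZero hld1 hld2
  have hAut (f : Equiv.Perm D0) :
      ((∀ x y, f (leftZeroWithZero z x y) = leftZeroWithZero z (f x) (f y)) ∧
        ∀ x y, f (rd x y) = rd (f x) (f y)) ↔ f z = z := by
    rw [map_rd_iff_map_ld hrd, and_self, map_leftZeroWithZero_iff]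
  have hAutGroup : dimonoidAutGroup (leftZeroWithZero z) rd =
      MulAction.stabilizer (Equiv.Perm D0) z :=
    Subgroup.ext fun f => hAut f
  refine ⟨isDimonoid_of_abelian hrd leftZeroWithZero_assoc leftZeroWithZero_swap_right,
    fun x y => (hrd y x).symm, ?_, hAut,
    ⟨(MulEquiv.subgroupCongr hAutGroup).trans (Equiv.Perm.stabilizerMulEquivPermCompl z)⟩,
    fun hD2 ⟨hcomm, _⟩ => ?_⟩
  · ext e
    simp only [hrd, and_self, Set.mem_ofPred_eq, Set.mem_compl_iff, Set.mem_singleton_iff]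
    exact forall_leftZeroWithZero_eq_self_iff hD e
  · obtain ⟨x, y, hxy⟩ := exists_leftZeroWithZero_ne hD2
    exact hxy (hcomm x y)
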